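/- Let A be a bialgebra over R coacting on B via α, χ : B → R a character, and π : A → A' a bialgebra morphism with π((χ ⊗ id)α(b)) = χ(b)·1 for all b. Then for every b ∈ B, the element a = (χ ⊗ id)(α(b)) satisfies (π ⊗ id)(Δ(a)) = 1 ⊗ a. -/

import Mathlib

/-!
Write `c = (χ ⊗ id) ∘ α`. Slicing with `χ` commutes with maps on the second tensor leg and with
reassociation, so coassociativity of `α` gives `Δ ∘ c = (c ⊗ id) ∘ α`. Applying `π ⊗ id` and the
fixed-point hypothesis `π ∘ c = χ(·) • 1` turns the right-hand side into `1 ⊗ c`.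
-/

open TensorProduct

namespace LinearMap

variable {R M N P S : Type*} [CommSemiring R] [AddCommMonoid M] [AddCommMonoid N]
  [AddCommMonoid P] [AddCommMonoid S] [Module R M] [Module R N] [Module R P] [Module R S]

variable (N) in
def slice (φ : M →ₗ[R] R) : M ⊗[R] N →ₗ[R] N :=
  (TensorProduct.lid R N).toLinearMap ∘ₗ φ.rTensor N

@[simp]
theorem slice_tmul (φ : M →ₗ[R] R) (m : M) (n : N) : φ.slice N (m ⊗ₜ n) = φ m • n := rfl

theorem comp_slice (φ : M →ₗ[R] R) (f : N →ₗ[R] P) :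
    f ∘ₗ φ.slice N = φ.slice P ∘ₗ f.lTensor M :=
  TensorProduct.ext' fun m n ↦ by simp

theorem slice_comp_assoc (φ : M →ₗ[R] R) :
    φ.slice (N ⊗[R] P) ∘ₗ (TensorProduct.assoc R M N P).toLinearMap =
      (φ.slice N).rTensor P :=
  TensorProduct.ext_threefold fun m n p ↦ by simp [smul_tmul']

theorem rTensor_smulRight (φ : M →ₗ[R] R) (s : S) :
    (φ.smulRight s).rTensor N = TensorProduct.mk R S N s ∘ₗ φ.slice N :=
  TensorProduct.ext' fun m n ↦ by simp [smul_tmul]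

theorem comul_comp_slice_comp_of_coassoc {C : Type*} [AddCommMonoid C] [Module R C]
    [CoalgebraStruct R C] (α : M →ₗ[R] M ⊗[R] C) (φ : M →ₗ[R] R)
    (hα : (TensorProduct.assoc R M C C).toLinearMap ∘ₗ α.rTensor C ∘ₗ α =
      (CoalgebraStruct.comul (R := R)).lTensor M ∘ₗ α) :
    CoalgebraStruct.comul ∘ₗ φ.slice C ∘ₗ α = (φ.slice C ∘ₗ α).rTensor C ∘ₗ α :=
  calc CoalgebraStruct.comul ∘ₗ φ.slice C ∘ₗ α
      = φ.slice (C ⊗[R] C) ∘ₗ (CoalgebraStruct.comul (R := R)).lTensor M ∘ₗ α := by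
        rw [← comp_assoc, comp_slice, comp_assoc]
    _ = φ.slice (C ⊗[R] C) ∘ₗ (TensorProduct.assoc R M C C).toLinearMap ∘ₗ
          α.rTensor C ∘ₗ α := by
        rw [hα]
    _ = (φ.slice C ∘ₗ α).rTensor C ∘ₗ α := by
        rw [← comp_assoc, slice_comp_assoc, rTensor_comp, comp_assoc]

end LinearMap

theorem orbit_map_lands_in_coinvariants_general
    {R A A' B : Type*} [CommRing R] [Ring A] [Bialgebra R A] [Ring A']
    [Bialgebra R A'] [Ring B] [Algebra R B]
    (α : B →ₗ[R] B ⊗[R] A)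
    (hcoassoc : ∀ b : B,
      (TensorProduct.assoc R B A A)
          (TensorProduct.map α (LinearMap.id : A →ₗ[R] A) (α b)) =
        TensorProduct.map (LinearMap.id : B →ₗ[R] B) (Coalgebra.comul (R := R)) (α b))
    (χ : B →ₐ[R] R) (π : A →ₐ[R] A')
    (hfix : ∀ b : B,
      π ((TensorProduct.lid R A)
          (TensorProduct.map χ.toLinearMap (LinearMap.id : A →ₗ[R] A) (α b))) =
        χ b • (1 : A')) :
    ∀ b : B,
      TensorProduct.map π.toLinearMap (LinearMap.id : A →ₗ[R] A)
          (Coalgebra.comul (R := R)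
            ((TensorProduct.lid R A)
              (TensorProduct.map χ.toLinearMap (LinearMap.id : A →ₗ[R] A) (α b)))) =
        (1 : A') ⊗ₜ[R]
          ((TensorProduct.lid R A)
            (TensorProduct.map χ.toLinearMap (LinearMap.id : A →ₗ[R] A) (α b))) := by
  have hπc : π.toLinearMap ∘ₗ χ.toLinearMap.slice A ∘ₗ α = χ.toLinearMap.smulRight 1 :=
    LinearMap.ext hfix
  have hcomul := LinearMap.comul_comp_slice_comp_of_coassoc α χ.toLinearMap (LinearMap.ext hcoassoc)
  have key : π.toLinearMap.rTensor A ∘ₗ CoalgebraStruct.comul ∘ₗ χ.toLinearMap.slice A ∘ₗ α =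
      TensorProduct.mk R A' A 1 ∘ₗ χ.toLinearMap.slice A ∘ₗ α := by
    rw [hcomul, ← LinearMap.comp_assoc, ← LinearMap.rTensor_comp, hπc, LinearMap.rTensor_smulRight, LinearMap.comp_assoc]
  exact LinearMap.congr_fun key

/-- If the quantum subgroup determined by a bialgebra morphism `π : A → A'` fixes the
point `χ`, then the elements `a = (χ ⊗ id)α(b)` are left-coinvariant with respect to
`π`: `(π ⊗ id)(Δ a) = 1 ⊗ a`. -/
theorem orbit_map_lands_in_coinvariants
    {R A A' B : Type*} [CommRing R] [Ring A] [Bialgebra R A] [Ring A']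
    [Bialgebra R A'] [Ring B] [Algebra R B]
    (α : B →ₗ[R] B ⊗[R] A)
    (hcoassoc : ∀ b : B,
      (TensorProduct.assoc R B A A)
          (TensorProduct.map α (LinearMap.id : A →ₗ[R] A) (α b)) =
        TensorProduct.map (LinearMap.id : B →ₗ[R] B) (Coalgebra.comul (R := R)) (α b))
    (hcounit : ∀ b : B,
      (TensorProduct.rid R B)
          (TensorProduct.map (LinearMap.id : B →ₗ[R] B)
            (Coalgebra.counit (R := R) (A := A)) (α b)) = b)
    (χ : B →ₐ[R] R) (π : A →ₐ[R] A')
    (hπΔ : ∀ a : A,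
      TensorProduct.map π.toLinearMap π.toLinearMap (Coalgebra.comul a) =
        Coalgebra.comul (R := R) (π a))
    (hfix : ∀ b : B,
      π ((TensorProduct.lid R A)
          (TensorProduct.map χ.toLinearMap (LinearMap.id : A →ₗ[R] A) (α b))) =
        χ b • (1 : A')) :
    ∀ b : B,
      TensorProduct.map π.toLinearMap (LinearMap.id : A →ₗ[R] A)
          (Coalgebra.comul (R := R)
            ((TensorProduct.lid R A)
              (TensorProduct.map χ.toLinearMap (LinearMap.id : A →ₗ[R] A) (α b)))) =
        (1 : A') ⊗ₜ[R]
          ((TensorProduct.lid R A)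
            (TensorProduct.map χ.toLinearMap (LinearMap.id : A →ₗ[R] A) (α b))) :=
  orbit_map_lands_in_coinvariants_general α hcoassoc χ π hfix
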